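/- arXiv:2403.01447 — 3 statements merged into one kernel-verified Lean document; each statement's English description precedes it below -/
import Mathlib

section
/- If T is a differentiable symmetric second-order tensor field with Div T = 0 on R, then Grad T · (Grad T)ᵀ = Div(T (Grad T)ᵀ), where the transpose Mᵀ of a third-order tensor M is defined by Mᵀ·(u⊗v⊗w) = M·(v⊗w⊗u); hence the integral of Grad T · (Grad T)ᵀ over R reduces to a boundary integral. -/
open MeasureTheory Real

noncomputable section

abbrev E3 := EuclideanSpace ℝ (Fin 3)

/-- Partial derivative in the `j`-th coordinate direction. -/
def pd (j : Fin 3) (f : E3 → ℝ) (x : E3) : ℝ := fderiv ℝ f x (EuclideanSpace.single j 1)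

lemma pd_sum {ι : Type*} (j : Fin 3) (s : Finset ι) (f : ι → E3 → ℝ) (x : E3)
    (hf : ∀ i ∈ s, DifferentiableAt ℝ (f i) x) :
    pd j (fun y => ∑ i ∈ s, f i y) x = ∑ i ∈ s, pd j (f i) x := by
  unfold pd
  rw [fderiv_fun_sum hf]
  simp

lemma pd_mul (j : Fin 3) (f g : E3 → ℝ) (x : E3)
    (hf : DifferentiableAt ℝ f x) (hg : DifferentiableAt ℝ g x) :
    pd j (fun y => f y * g y) x = f x * pd j g x + g x * pd j f x := by
  unfold pd
  rw [fderiv_fun_mul hf hg]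
  simp

lemma pd_zero_of_eqOn {R : Set E3} (hR : IsOpen R) {x : E3} (hx : x ∈ R)
    (f : E3 → ℝ) (hf : ∀ y ∈ R, f y = 0) (j : Fin 3) : pd j f x = 0 := by
  have h : f =ᶠ[nhds x] (fun _ => (0 : ℝ)) :=
    Filter.eventuallyEq_of_mem (hR.mem_nhds hx) hf
  unfold pd
  rw [h.fderiv_eq]
  simp

lemma e3_decomp (v : E3) : ∑ k, v k • (EuclideanSpace.single k (1 : ℝ)) = v := by
  ext i
  rw [show ((∑ k, v k • (EuclideanSpace.single k (1 : ℝ))) i)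
      = ∑ k, (v k • (EuclideanSpace.single k (1 : ℝ))) i from by rw [WithLp.ofLp_sum]; exact Finset.sum_apply i _ _]
  simp [EuclideanSpace.single_apply, Finset.sum_ite_eq']

lemma pd_comm (f : E3 → ℝ) (hf : Differentiable ℝ f)
    (hf2 : ∀ k, Differentiable ℝ (fun x => pd k f x)) (i j : Fin 3) (x : E3) :
    pd i (fun y => pd j f y) x = pd j (fun y => pd i f y) x := by
  set f' : E3 → (E3 →L[ℝ] ℝ) :=
    fun y => ∑ k, pd k f y • (EuclideanSpace.proj k : E3 →L[ℝ] ℝ) with hf'def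
  have hrep : ∀ y, fderiv ℝ f y = f' y := by
    intro y
    ext v
    conv_lhs => rw [← e3_decomp v]
    rw [map_sum]
    simp [hf'def, pd, mul_comm]
  have hF' : ∀ y, HasFDerivAt f (f' y) y := by
    intro y
    rw [← hrep y]
    exact (hf y).hasFDerivAt
  have hd : Differentiable ℝ f' := by
    apply Differentiable.fun_sum
    intro k _
    exact (hf2 k).smul_const _
  set f'' := fderiv ℝ f' x with hf''def
  have hF'' : HasFDerivAt f' f'' x := (hd x).hasFDerivAt
  have hsymm := second_derivative_symmetric hF' hF''
  have key : ∀ a b : Fin 3, pd a (fun y => pd b f y) x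
      = f'' (EuclideanSpace.single a 1) (EuclideanSpace.single b 1) := by
    intro a b
    have h1 : (fun y => pd b f y) = fun y => f' y (EuclideanSpace.single b 1) := by
      funext y
      rw [pd, hrep y]
    have h2 := hF''.clm_apply (hasFDerivAt_const (EuclideanSpace.single b (1 : ℝ)) x)
    have h3 : fderiv ℝ (fun y => f' y (EuclideanSpace.single b 1)) x
        = (f' x).comp (0 : E3 →L[ℝ] E3) + f''.flip (EuclideanSpace.single b 1) :=
      h2.fderiv
    unfold pd
    simp only [hrep]
    rw [h3]
    simp
  rw [key i j, key j i]
  exact hsymm _ _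

/-- For a twice differentiable symmetric tensor field `T` with `Div T = 0` on the open region
`R`, the pointwise identity `Grad T · (Grad T)ᵀ = Div (T (Grad T)ᵀ)` holds on `R`, where the
transpose of a third-order tensor cyclically permutes the slots, so that
`Grad T · (Grad T)ᵀ = ∑ ∂ₖ T i j * ∂ᵢ T j k`; consequently, via the divergence theorem, the
integral of `Grad T · (Grad T)ᵀ` over `R` reduces to a boundary integral. -/
theorem statement2
    (R B : Set E3) (ν : E3 → E3) (σ : Measure E3) (hR : IsOpen R)
    (T : E3 → Fin 3 → Fin 3 → ℝ)
    (hsym : ∀ x i j, T x i j = T x j i)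
    (hdiff : ∀ i j, Differentiable ℝ (fun x => T x i j))
    (hdiff2 : ∀ i j k, Differentiable ℝ (fun x => pd k (fun y => T y i j) x))
    (hdivT : ∀ x ∈ R, ∀ i, (∑ j, pd j (fun y => T y i j) x) = 0)
    (hdivthm : ∀ F : E3 → E3, (∀ i, Differentiable ℝ (fun x => (F x) i)) →
      (∫ x in R, ∑ j, pd j (fun y => (F y) j) x) = ∫ x in B, ∑ j, (F x) j * (ν x) j ∂σ) :
    (∀ x ∈ R,
      (∑ i, ∑ j, ∑ k, pd k (fun y => T y i j) x * pd i (fun y => T y j k) x)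
        = ∑ i, pd i (fun y => ∑ j, ∑ k, T y j k * pd j (fun z => T z k i) y) x) ∧
    (∫ x in R, ∑ i, ∑ j, ∑ k, pd k (fun y => T y i j) x * pd i (fun y => T y j k) x)
      = ∫ x in B, ∑ i, (∑ j, ∑ k, T x j k * pd j (fun z => T z k i) x) * (ν x) i ∂σ := by
  -- expansion of the divergence of T (Grad T)ᵀ
  have hexp : ∀ (x : E3) (i : Fin 3),
      pd i (fun y => ∑ j, ∑ k, T y j k * pd j (fun z => T z k i) y) x
      = ∑ j, ∑ k, (T x j k * pd i (fun y => pd j (fun z => T z k i) y) x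
          + pd j (fun z => T z k i) x * pd i (fun y => T y j k) x) := by
    intro x i
    rw [pd_sum i _ _ x (fun j _ => by
      exact (Differentiable.fun_sum fun k _ =>
        ((hdiff j k).fun_mul (hdiff2 k i j))).differentiableAt)]
    refine Finset.sum_congr rfl fun j _ => ?_
    rw [pd_sum i _ _ x (fun k _ => ((hdiff j k).fun_mul (hdiff2 k i j)).differentiableAt)]
    refine Finset.sum_congr rfl fun k _ => ?_
    exact pd_mul i _ _ x ((hdiff j k).differentiableAt) ((hdiff2 k i j).differentiableAt)
  -- the second-derivative term vanishes on R
  have h0 : ∀ x ∈ R, ∀ j k : Fin 3,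
      (∑ i, pd i (fun y => pd j (fun z => T z k i) y) x) = 0 := by
    intro x hx j k
    have hcomm : ∀ i : Fin 3,
        pd i (fun y => pd j (fun z => T z k i) y) x
        = pd j (fun y => pd i (fun z => T z k i) y) x := fun i =>
      pd_comm _ (hdiff k i) (fun m => hdiff2 k i m) i j x
    calc (∑ i, pd i (fun y => pd j (fun z => T z k i) y) x)
        = ∑ i, pd j (fun y => pd i (fun z => T z k i) y) x :=
          Finset.sum_congr rfl fun i _ => hcomm i
      _ = pd j (fun y => ∑ i, pd i (fun z => T z k i) y) x := by
          rw [pd_sum j _ _ x (fun i _ => (hdiff2 k i i).differentiableAt)]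
      _ = 0 := pd_zero_of_eqOn hR hx _ (fun y hy => hdivT y hy k) j
  have part1 : ∀ x ∈ R,
      (∑ i, ∑ j, ∑ k, pd k (fun y => T y i j) x * pd i (fun y => T y j k) x)
        = ∑ i, pd i (fun y => ∑ j, ∑ k, T y j k * pd j (fun z => T z k i) y) x := by
    intro x hx
    have hsplit : (∑ i, pd i (fun y => ∑ j, ∑ k, T y j k * pd j (fun z => T z k i) y) x)
        = (∑ i, ∑ j, ∑ k, T x j k * pd i (fun y => pd j (fun z => T z k i) y) x)
          + ∑ i, ∑ j, ∑ k, pd j (fun z => T z k i) x * pd i (fun y => T y j k) x := by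
      rw [← Finset.sum_add_distrib]
      refine Finset.sum_congr rfl fun i _ => ?_
      rw [hexp x i, ← Finset.sum_add_distrib]
      refine Finset.sum_congr rfl fun j _ => ?_
      rw [← Finset.sum_add_distrib]
    have hvanish : (∑ i, ∑ j, ∑ k, T x j k * pd i (fun y => pd j (fun z => T z k i) y) x)
        = 0 := by
      rw [Finset.sum_comm]
      refine Finset.sum_eq_zero fun j _ => ?_
      rw [Finset.sum_comm]
      refine Finset.sum_eq_zero fun k _ => ?_
      rw [← Finset.mul_sum, h0 x hx j k, mul_zero]
    rw [hsplit, hvanish, zero_add]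
    simp only [Fin.sum_univ_three]
    ring
  refine ⟨part1, ?_⟩
  -- divergence theorem part
  have hFd : ∀ i : Fin 3, Differentiable ℝ
      (fun x => ∑ j, ∑ k, T x j k * pd j (fun z => T z k i) x) :=
    fun i => Differentiable.fun_sum fun j _ => Differentiable.fun_sum fun k _ =>
      (hdiff j k).fun_mul (hdiff2 k i j)
  have hdt := hdivthm (fun x => (WithLp.toLp 2 (fun i => ∑ j, ∑ k, T x j k * pd j (fun z => T z k i) x) : E3))
    hFd
  calc (∫ x in R, ∑ i, ∑ j, ∑ k, pd k (fun y => T y i j) x * pd i (fun y => T y j k) x)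
      = ∫ x in R, ∑ i, pd i (fun y => ∑ j, ∑ k, T y j k * pd j (fun z => T z k i) y) x :=
        setIntegral_congr_fun hR.measurableSet part1
    _ = ∫ x in B, ∑ i, (∑ j, ∑ k, T x j k * pd j (fun z => T z k i) x) * (ν x) i ∂σ := hdt
end
end

section
/- With sym₃ and skw₃ the totally symmetric and remainder parts of Grad T for a symmetric tensor field T, the identity Grad T · (Grad T)ᵀ = |sym₃ Grad T|² − (1/2)|skw₃ Grad T|² holds pointwise, where ᵀ is the cyclic transpose of a third-order tensor. -/
open Real

noncomputable section

/-- Frobenius inner product of third-order tensors on ℝ³. -/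
def dot3 (M N : Fin 3 → Fin 3 → Fin 3 → ℝ) : ℝ := ∑ i, ∑ j, ∑ k, M i j k * N i j k

/-- Cyclic transpose of a third-order tensor: `Mᵀ · (u⊗v⊗w) = M · (v⊗w⊗u)`. -/
def cyc (M : Fin 3 → Fin 3 → Fin 3 → ℝ) : Fin 3 → Fin 3 → Fin 3 → ℝ := fun i j k => M j k i

/-- Totally symmetric part `(1/3)(M + Mᵀ + (Mᵀ)ᵀ)` of a third-order tensor. -/
def sym3 (M : Fin 3 → Fin 3 → Fin 3 → ℝ) : Fin 3 → Fin 3 → Fin 3 → ℝ :=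
  fun i j k => (M i j k + cyc M i j k + cyc (cyc M) i j k) / 3

/-- The remainder part `skw₃ M = M − sym₃ M`. -/
def skw3 (M : Fin 3 → Fin 3 → Fin 3 → ℝ) : Fin 3 → Fin 3 → Fin 3 → ℝ :=
  fun i j k => M i j k - sym3 M i j k

/-!
Write `M = S + K` with `S = sym₃ M` and `K = skw₃ M`. The cyclic transpose preserves the Frobenius
product, fixes `S`, and `K + Kᵀ + Kᵀᵀ = 0`. Hence `S · K = S · (K + Kᵀ + Kᵀᵀ) / 3 = 0`, and
expanding `|K + Kᵀ + Kᵀᵀ|² = 0` gives `3|K|² + 6 K · Kᵀ = 0`. Substituting into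
`M · Mᵀ = S · S + 2 S · K + K · Kᵀ` yields the identity.
-/

section

variable (A B C M : Fin 3 → Fin 3 → Fin 3 → ℝ)

theorem dot3_comm : dot3 A B = dot3 B A := by
  simp only [dot3, mul_comm]

theorem dot3_add_left : dot3 (A + B) C = dot3 A C + dot3 B C := by
  simp only [dot3, Pi.add_apply, add_mul, Finset.sum_add_distrib]

theorem dot3_add_right : dot3 A (B + C) = dot3 A B + dot3 A C := by
  rw [dot3_comm, dot3_add_left, dot3_comm B, dot3_comm C]

theorem dot3_zero_right : dot3 A 0 = 0 := by
  simp [dot3]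

theorem dot3_cyc_cyc : dot3 (cyc A) (cyc B) = dot3 A B := by
  unfold dot3 cyc
  rw [Finset.sum_comm]
  exact Finset.sum_congr rfl fun _ _ => Finset.sum_comm

theorem cyc_add : cyc (A + B) = cyc A + cyc B := rfl

theorem cyc_cyc_cyc : cyc (cyc (cyc A)) = A := rfl

theorem cyc_sym3 : cyc (sym3 M) = sym3 M := by
  funext i j k
  simp only [cyc, sym3]
  ring

theorem sym3_add_skw3 : sym3 M + skw3 M = M := by
  funext i j k
  simp only [Pi.add_apply, skw3]
  ring

theorem skw3_add_cyc_add_cyc_cyc :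
    skw3 M + cyc (skw3 M) + cyc (cyc (skw3 M)) = 0 := by
  funext i j k
  simp only [Pi.add_apply, Pi.zero_apply, skw3, sym3, cyc]
  ring

theorem dot3_cyc_right_of_cyc_eq {S : Fin 3 → Fin 3 → Fin 3 → ℝ} (hS : cyc S = S)
    (A : Fin 3 → Fin 3 → Fin 3 → ℝ) : dot3 S (cyc A) = dot3 S A :=
  calc dot3 S (cyc A) = dot3 (cyc S) (cyc A) := by rw [hS]
    _ = dot3 S A := dot3_cyc_cyc S A

theorem dot3_sym3_skw3 : dot3 (sym3 M) (skw3 M) = 0 := by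
  have h := congrArg (dot3 (sym3 M)) (skw3_add_cyc_add_cyc_cyc M)
  simp only [dot3_add_right, dot3_zero_right, dot3_cyc_right_of_cyc_eq (cyc_sym3 M)] at h
  linarith

theorem dot3_skw3_cyc :
    dot3 (skw3 M) (cyc (skw3 M)) = -(1 / 2) * dot3 (skw3 M) (skw3 M) := by
  set K := skw3 M
  have hzero := congrArg (fun N => dot3 N N) (skw3_add_cyc_add_cyc_cyc M)
  simp only [dot3_add_left, dot3_add_right, dot3_zero_right] at hzero
  have hK : dot3 (cyc K) (cyc K) = dot3 K K := dot3_cyc_cyc K K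
  have hK' : dot3 (cyc (cyc K)) (cyc (cyc K)) = dot3 K K := by rw [dot3_cyc_cyc, dot3_cyc_cyc]
  have hKK' : dot3 (cyc K) (cyc (cyc K)) = dot3 K (cyc K) := dot3_cyc_cyc K (cyc K)
  have hK'K : dot3 (cyc (cyc K)) K = dot3 K (cyc K) := by
    rw [← dot3_cyc_cyc, cyc_cyc_cyc, dot3_comm]
  rw [dot3_comm (cyc K) K, dot3_comm (cyc (cyc K)) (cyc K), dot3_comm K (cyc (cyc K))] at hzero
  linarith

end

theorem statement4_general
    (M : Fin 3 → Fin 3 → Fin 3 → ℝ) :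
    dot3 M (cyc M) = dot3 (sym3 M) (sym3 M) - (1/2) * dot3 (skw3 M) (skw3 M) := by
  calc dot3 M (cyc M) = dot3 (sym3 M + skw3 M) (cyc (sym3 M + skw3 M)) := by
        rw [sym3_add_skw3]
    _ = dot3 (sym3 M) (sym3 M) + dot3 (skw3 M) (cyc (skw3 M)) := by
        rw [cyc_add, cyc_sym3, dot3_add_left, dot3_add_right, dot3_add_right,
          dot3_cyc_right_of_cyc_eq (cyc_sym3 M), dot3_comm (skw3 M) (sym3 M), dot3_sym3_skw3]
        ring
    _ = _ := by rw [dot3_skw3_cyc]; ring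

/-- For a third-order tensor `M` arising as the gradient of a symmetric second-order tensor
field (so `M i j k = M j i k`), one has
`M · Mᵀ = |sym₃ M|² − (1/2)|skw₃ M|²`, where `ᵀ` is the cyclic transpose. -/
theorem statement4
    (M : Fin 3 → Fin 3 → Fin 3 → ℝ)
    (hsym : ∀ i j k, M i j k = M j i k) :
    dot3 M (cyc M) = dot3 (sym3 M) (sym3 M) - (1/2) * dot3 (skw3 M) (skw3 M) :=
  statement4_general M
end
end

section
/- For a spherically symmetric, divergence-free symmetric tensor field S on a spherical shell, with radial and transverse components S∥ and S⊥, the pointwise identity |Grad S|² − (1/2)|Grad(tr S)|² = Grad S · (Grad S)ᵀ holds, where ᵀ is the cyclic transpose of a third-order tensor. Equivalently, |Grad(tr S)|² = (S∥′+2S⊥′)², |Grad S|² = 2(S∥′² + S⊥′²), and Grad S·(Grad S)ᵀ = (3/2)S∥′² − 2S∥′S⊥′ under the constraint S∥′ + 2(S∥−S⊥)/r = 0. -/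
open Real

noncomputable section

/-- The spherically symmetric symmetric tensor field
`S = S∥ e_r⊗e_r + S⊥ (1 − e_r⊗e_r)` with radial component functions `Spar`, `Sperp`. -/
def sphS (Spar Sperp : ℝ → ℝ) : E3 → Fin 3 → Fin 3 → ℝ := fun y i j =>
  Spar ‖y‖ * (y i * y j / ‖y‖^2)
    + Sperp ‖y‖ * ((if i = j then (1:ℝ) else 0) - y i * y j / ‖y‖^2)

lemma hasFDerivAt_norm' (x : E3) (hx : x ≠ 0) :
    HasFDerivAt (fun y : E3 => ‖y‖) ((1 / (2 * ‖x‖)) • ((2:ℕ) • innerSL ℝ x)) x := by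
  have hr0 : (0:ℝ) < ‖x‖ := norm_pos_iff.mpr hx
  have hr2 : ‖x‖^2 ≠ 0 := by positivity
  have hn2 : HasFDerivAt (fun y : E3 => ‖y‖^2) ((2:ℕ) • innerSL ℝ x) x := by
    simpa using (hasFDerivAt_id x).norm_sq
  have h := (Real.hasDerivAt_sqrt hr2).comp_hasFDerivAt x hn2
  have he : (fun y : E3 => Real.sqrt (‖y‖^2)) = fun y : E3 => ‖y‖ :=
    funext fun y => Real.sqrt_sq (norm_nonneg y)
  rw [Function.comp_def, he, Real.sqrt_sq (norm_nonneg x)] at h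
  exact h

set_option maxHeartbeats 2000000 in
lemma hasFDerivAt_sphS (Spar Sperp : ℝ → ℝ) (x : E3) (hx : x ≠ 0)
    (ha : DifferentiableAt ℝ Spar ‖x‖) (hb : DifferentiableAt ℝ Sperp ‖x‖) (i j : Fin 3) :
    HasFDerivAt (fun y => sphS Spar Sperp y i j)
      ( ((deriv Spar ‖x‖ * (x i * x j / ‖x‖^2)
            + deriv Sperp ‖x‖ * ((if i = j then (1:ℝ) else 0) - x i * x j / ‖x‖^2)) / ‖x‖
          - 2 * (Spar ‖x‖ - Sperp ‖x‖) * (x i * x j) / ‖x‖^4) • innerSL ℝ x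
        + ((Spar ‖x‖ - Sperp ‖x‖) * x j / ‖x‖^2) • (EuclideanSpace.proj i : E3 →L[ℝ] ℝ)
        + ((Spar ‖x‖ - Sperp ‖x‖) * x i / ‖x‖^2) • (EuclideanSpace.proj j : E3 →L[ℝ] ℝ) ) x := by
  have hr0 : (0:ℝ) < ‖x‖ := norm_pos_iff.mpr hx
  have hr2 : ‖x‖^2 ≠ 0 := by positivity
  have hn2 : HasFDerivAt (fun y : E3 => ‖y‖^2) ((2:ℕ) • innerSL ℝ x) x := by
    simpa using (hasFDerivAt_id x).norm_sq
  have hN := hasFDerivAt_norm' x hx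
  have hxi : ∀ i : Fin 3, HasFDerivAt (fun y : E3 => y i)
      (EuclideanSpace.proj i : E3 →L[ℝ] ℝ) x := by
    intro i
    have h := (EuclideanSpace.proj (𝕜 := ℝ) (i := i) (ι := Fin 3)).hasFDerivAt (x := x)
    convert h using 1
    rfl
  have hinv : HasFDerivAt (fun y : E3 => (‖y‖^2)⁻¹)
      ((-((‖x‖^2)^2)⁻¹) • ((2:ℕ) • innerSL ℝ x)) x :=
    (hasDerivAt_inv hr2).comp_hasFDerivAt x hn2
  have hprod := (hxi i).mul (hxi j)
  have hP := hprod.mul hinv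
  have hA := ha.hasDerivAt.comp_hasFDerivAt x hN
  have hB := hb.hasDerivAt.comp_hasFDerivAt x hN
  have hδ : HasFDerivAt (fun _ : E3 => (if i = j then (1:ℝ) else 0)) (0 : E3 →L[ℝ] ℝ) x :=
    hasFDerivAt_const _ _
  have hf := (hA.mul hP).add (hB.mul (hδ.sub hP))
  have hfe : (fun y => sphS Spar Sperp y i j)
      = fun y : E3 => (Spar ∘ norm) y * (y i * y j * (‖y‖^2)⁻¹)
        + (Sperp ∘ norm) y * ((if i = j then (1:ℝ) else 0) - y i * y j * (‖y‖^2)⁻¹) := by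
    funext y; simp [sphS, div_eq_mul_inv, Function.comp]
  rw [hfe]
  refine hf.congr_fderiv ?_
  ext v
  have hin : ∀ v : E3, (innerSL ℝ x) v = inner ℝ x v := fun _ => rfl
  simp only [ContinuousLinearMap.add_apply, ContinuousLinearMap.coe_smul', Pi.smul_apply,
    smul_eq_mul, ContinuousLinearMap.coe_sub', Pi.sub_apply, ContinuousLinearMap.zero_apply,
    ContinuousLinearMap.smul_apply, hin, PiLp.proj_apply, Pi.mul_apply,
    Function.comp]
  field_simp
  ring

lemma pd_sphS (Spar Sperp : ℝ → ℝ) (x : E3) (hx : x ≠ 0)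
    (ha : DifferentiableAt ℝ Spar ‖x‖) (hb : DifferentiableAt ℝ Sperp ‖x‖) (i j k : Fin 3) :
    pd k (fun y => sphS Spar Sperp y i j) x =
      ((deriv Spar ‖x‖ * (x i * x j / ‖x‖^2)
          + deriv Sperp ‖x‖ * ((if i = j then (1:ℝ) else 0) - x i * x j / ‖x‖^2)) / ‖x‖
        - 2 * (Spar ‖x‖ - Sperp ‖x‖) * (x i * x j) / ‖x‖^4) * x k
      + (Spar ‖x‖ - Sperp ‖x‖) * x j / ‖x‖^2 * (if i = k then 1 else 0)
      + (Spar ‖x‖ - Sperp ‖x‖) * x i / ‖x‖^2 * (if j = k then 1 else 0) := by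
  rw [pd, (hasFDerivAt_sphS Spar Sperp x hx ha hb i j).fderiv]
  simp only [ContinuousLinearMap.add_apply, ContinuousLinearMap.coe_smul', Pi.smul_apply,
    smul_eq_mul, PiLp.proj_apply, EuclideanSpace.single_apply]
  have : (innerSL ℝ x) (EuclideanSpace.single k 1) = x k := by
    simp [EuclideanSpace.inner_single_right]
  rw [this]

/-- pd of the constrained tensor in normalized form. -/
lemma pd_sphS' (Spar Sperp : ℝ → ℝ) (x : E3) (hx : x ≠ 0)
    (ha : DifferentiableAt ℝ Spar ‖x‖) (hb : DifferentiableAt ℝ Sperp ‖x‖)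
    (hst : Spar ‖x‖ - Sperp ‖x‖ = -(deriv Spar ‖x‖ * ‖x‖)/2) (i j k : Fin 3) :
    pd k (fun y => sphS Spar Sperp y i j) x =
      deriv Spar ‖x‖ * (x i / ‖x‖) * (x j / ‖x‖) * (x k / ‖x‖)
      + deriv Sperp ‖x‖ * (x k / ‖x‖)
          * ((if i = j then (1:ℝ) else 0) - (x i / ‖x‖) * (x j / ‖x‖))
      - deriv Spar ‖x‖ / 2
          * ((if i = k then (1:ℝ) else 0) * (x j / ‖x‖)
             + (if j = k then (1:ℝ) else 0) * (x i / ‖x‖)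
             - 2 * (x i / ‖x‖) * (x j / ‖x‖) * (x k / ‖x‖)) := by
  have hr0 : (0:ℝ) < ‖x‖ := norm_pos_iff.mpr hx
  rw [pd_sphS Spar Sperp x hx ha hb i j k, hst]
  generalize (if i = j then (1:ℝ) else 0) = dij
  generalize (if i = k then (1:ℝ) else 0) = dik
  generalize (if j = k then (1:ℝ) else 0) = djk
  field_simp
  ring

lemma pd_trace (Spar Sperp : ℝ → ℝ) (x : E3) (hx : x ≠ 0)
    (ha : DifferentiableAt ℝ Spar ‖x‖) (hb : DifferentiableAt ℝ Sperp ‖x‖) (k : Fin 3) :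
    pd k (fun y => ∑ i, sphS Spar Sperp y i i) x
      = ∑ i, pd k (fun y => sphS Spar Sperp y i i) x := by
  have h := HasFDerivAt.fun_sum (u := Finset.univ)
    (fun i _ => hasFDerivAt_sphS Spar Sperp x hx ha hb i i)
  rw [pd, h.fderiv, ContinuousLinearMap.sum_apply]
  refine Finset.sum_congr rfl fun i _ => ?_
  rw [pd, (hasFDerivAt_sphS Spar Sperp x hx ha hb i i).fderiv]

/-- For a spherically symmetric, divergence-free symmetric tensor field `S` on a spherical
shell, the pointwise identity `|Grad S|² − (1/2)|Grad(tr S)|² = Grad S · (Grad S)ᵀ` holds,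
where `ᵀ` is the cyclic transpose of a third-order tensor; equivalently,
`|Grad(tr S)|² = (S∥′+2S⊥′)²`, `|Grad S|² = 2(S∥′² + S⊥′²)`, and
`Grad S · (Grad S)ᵀ = (3/2)S∥′² − 2S∥′S⊥′` under the constraint `S∥′ + 2(S∥−S⊥)/r = 0`. -/
theorem statement15
    (ri ro : ℝ) (hri : 0 < ri) (hio : ri < ro)
    (Spar Sperp : ℝ → ℝ)
    (hdpar : ∀ r ∈ Set.Ioo ri ro, DifferentiableAt ℝ Spar r)
    (hdperp : ∀ r ∈ Set.Ioo ri ro, DifferentiableAt ℝ Sperp r)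
    (hdf : ∀ r ∈ Set.Ioo ri ro, deriv Spar r + 2 * (Spar r - Sperp r) / r = 0)
    (x : E3) (hx : ‖x‖ ∈ Set.Ioo ri ro) :
    (∑ i, ∑ j, ∑ k, (pd k (fun y => sphS Spar Sperp y i j) x)^2)
        - (1/2) * (∑ k, (pd k (fun y => ∑ i, sphS Spar Sperp y i i) x)^2)
      = (∑ i, ∑ j, ∑ k, pd k (fun y => sphS Spar Sperp y i j) x
          * pd i (fun y => sphS Spar Sperp y j k) x) ∧
    (∑ k, (pd k (fun y => ∑ i, sphS Spar Sperp y i i) x)^2)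
      = (deriv Spar ‖x‖ + 2 * deriv Sperp ‖x‖)^2 ∧
    (∑ i, ∑ j, ∑ k, (pd k (fun y => sphS Spar Sperp y i j) x)^2)
      = 2 * ((deriv Spar ‖x‖)^2 + (deriv Sperp ‖x‖)^2) ∧
    (∑ i, ∑ j, ∑ k, pd k (fun y => sphS Spar Sperp y i j) x
        * pd i (fun y => sphS Spar Sperp y j k) x)
      = (3/2) * (deriv Spar ‖x‖)^2 - 2 * deriv Spar ‖x‖ * deriv Sperp ‖x‖ := by
  have hr0 : (0:ℝ) < ‖x‖ := lt_trans hri hx.1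
  have hx0 : x ≠ 0 := by
    intro h; rw [h] at hr0; simp at hr0
  have ha := hdpar ‖x‖ hx
  have hb := hdperp ‖x‖ hx
  have hc := hdf ‖x‖ hx
  have hst : Spar ‖x‖ - Sperp ‖x‖ = -(deriv Spar ‖x‖ * ‖x‖)/2 := by
    field_simp at hc ⊢; linarith
  have hsum : (x 0)^2 + (x 1)^2 + (x 2)^2 = ‖x‖^2 := by
    rw [EuclideanSpace.norm_eq, Real.sq_sqrt (by positivity)]
    simp [Fin.sum_univ_three, sq_abs]
  have hn : (x 0 / ‖x‖)^2 + (x 1 / ‖x‖)^2 + (x 2 / ‖x‖)^2 = 1 := by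
    field_simp
    linear_combination hsum
  have hT : (∑ k, (pd k (fun y => ∑ i, sphS Spar Sperp y i i) x)^2)
      = (deriv Spar ‖x‖ + 2 * deriv Sperp ‖x‖)^2 := by
    simp only [pd_trace Spar Sperp x hx0 ha hb]
    simp only [Fin.sum_univ_three, pd_sphS' Spar Sperp x hx0 ha hb hst]
    set a := deriv Spar ‖x‖
    set b := deriv Sperp ‖x‖
    set n0 := x 0 / ‖x‖
    set n1 := x 1 / ‖x‖
    set n2 := x 2 / ‖x‖
    simp only [Fin.reduceEq, reduceIte, if_true]
    linear_combination ((a+2*b)^2 + 5*b*(2*a-b)*(n0^2+n1^2+n2^2)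
      + (2*a-b)^2*(n0^2+n1^2+n2^2)^2) * hn
  have hG : (∑ i, ∑ j, ∑ k, (pd k (fun y => sphS Spar Sperp y i j) x)^2)
      = 2 * ((deriv Spar ‖x‖)^2 + (deriv Sperp ‖x‖)^2) := by
    simp only [Fin.sum_univ_three, pd_sphS' Spar Sperp x hx0 ha hb hst]
    set a := deriv Spar ‖x‖
    set b := deriv Sperp ‖x‖
    set n0 := x 0 / ‖x‖
    set n1 := x 1 / ‖x‖
    set n2 := x 2 / ‖x‖
    simp only [Fin.reduceEq, reduceIte, if_true]
    linear_combination (2*(a^2+b^2) + b*(2*a-b)*(n0^2+n1^2+n2^2)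
      + (2*a-b)^2*(n0^2+n1^2+n2^2)^2) * hn
  have hC : (∑ i, ∑ j, ∑ k, pd k (fun y => sphS Spar Sperp y i j) x
        * pd i (fun y => sphS Spar Sperp y j k) x)
      = (3/2) * (deriv Spar ‖x‖)^2 - 2 * deriv Spar ‖x‖ * deriv Sperp ‖x‖ := by
    simp only [Fin.sum_univ_three, pd_sphS' Spar Sperp x hx0 ha hb hst]
    set a := deriv Spar ‖x‖
    set b := deriv Sperp ‖x‖
    set n0 := x 0 / ‖x‖
    set n1 := x 1 / ‖x‖
    set n2 := x 2 / ‖x‖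
    simp only [Fin.reduceEq, reduceIte, if_true]
    linear_combination ((3/2)*a^2 - 2*a*b + b*(2*a-b)*(n0^2+n1^2+n2^2)
      + (2*a-b)^2*(n0^2+n1^2+n2^2)^2) * hn
  exact ⟨by rw [hG, hT, hC]; ring, hT, hG, hC⟩
end
end
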